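/- Let P be a two-orbit n-polytope in class 2_I with base flag Φ, and suppose the entry p_l of the Schläfli symbol (the number of l-faces in the rank-2 section Φ_{l+1}/Φ_{l-2}) is odd. Then either both l-1 and l lie in I, or neither does. Equivalently, if exactly one of l-1, l lies in I, then p_l is even, and in that case the subgroup generated by the two available involutions acting on the section (ρ_{l-1} and α_{l,l-1,l} if l-1 ∈ I, l ∉ I; or ρ_l and α_{l-1,l,l-1} if l-1 ∉ I, l ∈ I) is dihedral of order p_l. -/

import Mathlib

/-- An abstract polytope of rank `n`, presented by a partially ordered type of faces
with a strictly monotone rank function onto `{-1, 0, ..., n}`, such that every flag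
(maximal chain) has exactly one face of each rank (`faceAt`), every flag has a unique
`i`-adjacent flag for each `i = 0, ..., n-1` (the diamond condition, via `adj`), and
which is strongly flag-connected. -/
structure AbstractPolytope (n : ℕ) (Face : Type*) [PartialOrder Face] where
  rank : Face → ℤ
  rank_strictMono : ∀ {F G : Face}, F < G → rank F < rank G
  rank_le : ∀ F : Face, -1 ≤ rank F ∧ rank F ≤ (n : ℤ)
  /-- the unique face of rank `i` in the flag `Φ`, for `-1 ≤ i ≤ n` -/
  faceAt : Flag Face → ℤ → Face
  faceAt_mem : ∀ (Φ : Flag Face) (i : ℤ), -1 ≤ i → i ≤ (n : ℤ) → faceAt Φ i ∈ Φ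
  faceAt_rank : ∀ (Φ : Flag Face) (i : ℤ), -1 ≤ i → i ≤ (n : ℤ) → rank (faceAt Φ i) = i
  faceAt_eq : ∀ (Φ : Flag Face) (F : Face), F ∈ Φ → faceAt Φ (rank F) = F
  /-- the unique `i`-adjacent flag of `Φ`, for `0 ≤ i ≤ n-1` -/
  adj : Flag Face → ℕ → Flag Face
  adj_ne : ∀ (Φ : Flag Face) (i : ℕ), i < n → adj Φ i ≠ Φ
  adj_mem : ∀ (Φ : Flag Face) (i : ℕ), i < n →
    ∀ F ∈ Φ, rank F ≠ (i : ℤ) → F ∈ adj Φ i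
  adj_unique : ∀ (Φ Ψ : Flag Face) (i : ℕ), i < n → Ψ ≠ Φ →
    (∀ F ∈ Φ, rank F ≠ (i : ℤ) → F ∈ Ψ) → Ψ = adj Φ i
  /-- strong flag-connectedness: any two flags are joined by a sequence of successively
  adjacent flags, with all adjacencies at ranks not occurring among their common faces -/
  connected : ∀ Φ Ψ : Flag Face, ∃ (l : ℕ) (c : ℕ → Flag Face), c 0 = Φ ∧ c l = Ψ ∧
    ∀ m < l, ∃ i : ℕ, i < n ∧ c (m + 1) = adj (c m) i ∧
      ∀ F : Face, F ∈ Φ → F ∈ Ψ → rank F ≠ (i : ℤ)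

namespace AbstractPolytope

variable {n : ℕ} {Face : Type*} [PartialOrder Face]

/-- The automorphism group `Γ(P)`: order automorphisms of the set of faces.
It acts on flags via `Flag.map`; `g • Φ` denotes the image flag. -/
instance : MulAction (Face ≃o Face) (Flag Face) where
  smul g Φ := Flag.map g Φ
  one_smul Φ := by
    show Flag.map 1 Φ = Φ
    ext x
    simp [Flag.map, Flag.ofIsMaxChain]
  mul_smul g h Φ := by
    show Flag.map (g * h) Φ = Flag.map g (Flag.map h Φ)
    ext x
    simp [Flag.map, Flag.ofIsMaxChain, Set.image_image]

lemma smul_flag_def (g : Face ≃o Face) (Φ : Flag Face) : g • Φ = Flag.map g Φ := rfl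

/-- Two flags lie in the same orbit under the automorphism group. -/
def SameOrbit (Φ Ψ : Flag Face) : Prop := ∃ g : Face ≃o Face, g • Φ = Ψ

/-- The polytope has exactly two orbits on flags. -/
def TwoOrbit (_A : AbstractPolytope n Face) : Prop :=
  ∃ Φ Ψ : Flag Face, ¬ SameOrbit Φ Ψ ∧ ∀ X : Flag Face, SameOrbit X Φ ∨ SameOrbit X Ψ

/-- `I` is the class type set of the two-orbit polytope `A`: it consists precisely of
those ranks `i ∈ {0,...,n-1}` such that every flag and its `i`-adjacent flag lie in the
same orbit; that is, `A` is in the class `2_I`. -/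
def InClass (A : AbstractPolytope n Face) (I : Set ℕ) : Prop :=
  (∀ i ∈ I, i < n) ∧ ∀ i : ℕ, i < n → (i ∈ I ↔ ∀ Φ : Flag Face, SameOrbit Φ (A.adj Φ i))

/-- The stabilizer in the automorphism group of a face `F`. -/
def faceStab (_A : AbstractPolytope n Face) (F : Face) : Subgroup (Face ≃o Face) where
  carrier := {g : Face ≃o Face | g F = F}
  one_mem' := rfl
  mul_mem' := by
    intro a b ha hb
    show (a * b) F = F
    rw [RelIso.mul_apply]
    rw [show b F = F from hb, show a F = F from ha]
  inv_mem' := by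
    intro a ha
    show a⁻¹ F = F
    conv_lhs => rw [← show a F = F from ha]
    exact a.symm_apply_apply F

lemma mem_faceStab {A : AbstractPolytope n Face} {F : Face} {g : Face ≃o Face} :
    g ∈ A.faceStab F ↔ g F = F := Iff.rfl

end AbstractPolytope

namespace AbstractPolytope

section Aux

variable {n : ℕ} {Face : Type*} [PartialOrder Face]

lemma mem_smul_flag {g : Face ≃o Face} {Ψ : Flag Face} {F : Face} :
    F ∈ g • Ψ ↔ ∃ F' ∈ Ψ, g F' = F := by
  change F ∈ Flag.map g Ψ ↔ _
  rw [← SetLike.mem_coe, Flag.coe_map]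
  constructor
  · rintro ⟨x, hx, rfl⟩; exact ⟨x, hx, rfl⟩
  · rintro ⟨x, hx, rfl⟩; exact ⟨x, hx, rfl⟩

lemma smul_mem_flag {g : Face ≃o Face} {Ψ : Flag Face} {F : Face} (h : F ∈ Ψ) :
    g F ∈ g • Ψ := mem_smul_flag.2 ⟨F, h, rfl⟩

lemma exists_flag_mem (F : Face) : ∃ Ψ : Flag Face, F ∈ Ψ := by
  have hc : IsChain (· ≤ ·) ({F} : Set Face) := Set.subsingleton_singleton.isChain
  obtain ⟨M, hM, hsub⟩ := hc.exists_maxChain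
  exact ⟨Flag.ofIsMaxChain M hM, hsub rfl⟩

lemma int_squeeze {N : ℤ} (f : ℤ → ℤ)
    (hmono : ∀ j k, -1 ≤ j → k ≤ N → j < k → f j < f k)
    (hb : ∀ k, -1 ≤ k → k ≤ N → -1 ≤ f k ∧ f k ≤ N) :
    ∀ k, -1 ≤ k → k ≤ N → f k = k := by
  have low : ∀ k, -1 ≤ k → k ≤ N → k ≤ f k := by
    refine Int.le_induction ?_ ?_
    · intro h; exact (hb _ le_rfl h).1
    · intro m hm ih h
      have h1 : f m < f (m + 1) := hmono m (m + 1) hm h (by omega)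
      have := ih (by omega)
      omega
  have high : ∀ k, k ≤ N → -1 ≤ k → f k ≤ k := by
    refine Int.le_induction_down ?_ ?_
    · intro h; exact (hb _ h le_rfl).2
    · intro m hm ih h
      have h1 : f (m - 1) < f m := hmono (m - 1) m h hm (by omega)
      have := ih (by omega)
      omega
  intro k h1 h2
  exact le_antisymm (high k h2 h1) (low k h1 h2)

variable (A : AbstractPolytope n Face)

lemma flag_lt_of_rank_lt {Ψ : Flag Face} {F G : Face} (hF : F ∈ Ψ) (hG : G ∈ Ψ)
    (h : A.rank F < A.rank G) : F < G := by
  rcases Ψ.le_or_le hF hG with h1 | h1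
  · rcases eq_or_lt_of_le h1 with rfl | h2
    · exact absurd h (lt_irrefl _)
    · exact h2
  · rcases eq_or_lt_of_le h1 with rfl | h2
    · exact absurd h (lt_irrefl _)
    · exact absurd (A.rank_strictMono h2) (not_lt.2 h.le)

lemma rank_smul (g : Face ≃o Face) (F : Face) : A.rank (g F) = A.rank F := by
  obtain ⟨Ψ, hF⟩ := exists_flag_mem F
  set f : ℤ → ℤ := fun k => A.rank (g (A.faceAt Ψ k)) with hf
  have key : ∀ k, -1 ≤ k → k ≤ (n : ℤ) → f k = k := by
    apply int_squeeze f
    · intro j k hj hk hjk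
      have h1 : A.faceAt Ψ j < A.faceAt Ψ k := by
        apply A.flag_lt_of_rank_lt (A.faceAt_mem Ψ j hj (by omega))
          (A.faceAt_mem Ψ k (by omega) hk)
        rw [A.faceAt_rank Ψ j hj (by omega), A.faceAt_rank Ψ k (by omega) hk]
        exact hjk
      exact A.rank_strictMono (g.lt_iff_lt.2 h1)
    · intro k _ _
      exact A.rank_le _
  have h1 : -1 ≤ A.rank F ∧ A.rank F ≤ (n : ℤ) := A.rank_le F
  have h2 : A.rank (g (A.faceAt Ψ (A.rank F))) = A.rank F := key (A.rank F) h1.1 h1.2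
  rwa [A.faceAt_eq Ψ F hF] at h2

lemma smul_adj (g : Face ≃o Face) (Ψ : Flag Face) (i : ℕ) (hi : i < n) :
    g • (A.adj Ψ i) = A.adj (g • Ψ) i := by
  apply A.adj_unique (g • Ψ) (g • (A.adj Ψ i)) i hi
  · intro h
    exact A.adj_ne Ψ i hi (smul_left_cancel g h)
  · intro F hF hr
    rw [mem_smul_flag] at hF ⊢
    obtain ⟨F', hF', rfl⟩ := hF
    refine ⟨F', A.adj_mem Ψ i hi F' hF' ?_, rfl⟩
    rwa [← A.rank_smul g F']

lemma mem_adj_rev {Ψ : Flag Face} {i : ℕ} (hi : i < n) {F : Face}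
    (hF : F ∈ A.adj Ψ i) (hr : A.rank F ≠ (i : ℤ)) : F ∈ Ψ := by
  have hb := A.rank_le F
  have h1 : A.faceAt Ψ (A.rank F) ∈ A.adj Ψ i := by
    apply A.adj_mem Ψ i hi _ (A.faceAt_mem Ψ _ hb.1 hb.2)
    rwa [A.faceAt_rank Ψ _ hb.1 hb.2]
  have h2 : A.faceAt (A.adj Ψ i) (A.rank F) = F := A.faceAt_eq _ F hF
  have h3 : A.faceAt (A.adj Ψ i) (A.rank (A.faceAt Ψ (A.rank F))) = A.faceAt Ψ (A.rank F) :=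
    A.faceAt_eq _ _ h1
  rw [A.faceAt_rank Ψ _ hb.1 hb.2] at h3
  rw [← h2, h3]
  exact A.faceAt_mem Ψ _ hb.1 hb.2

lemma adj_invol (Ψ : Flag Face) (i : ℕ) (hi : i < n) : A.adj (A.adj Ψ i) i = Ψ := by
  symm
  apply A.adj_unique (A.adj Ψ i) Ψ i hi (Ne.symm (A.adj_ne Ψ i hi))
  intro F hF hr
  exact A.mem_adj_rev hi hF hr


lemma flag_eq_of_rank_eq {Ψ : Flag Face} {F G : Face} (hF : F ∈ Ψ) (hG : G ∈ Ψ)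
    (h : A.rank F = A.rank G) : F = G := by
  have h1 := A.faceAt_eq Ψ F hF
  have h2 := A.faceAt_eq Ψ G hG
  rw [← h1, ← h2, h]

lemma flag_le_of_rank_le {Ψ : Flag Face} {F G : Face} (hF : F ∈ Ψ) (hG : G ∈ Ψ)
    (h : A.rank F ≤ A.rank G) : F ≤ G := by
  rcases eq_or_lt_of_le h with he | hlt
  · exact le_of_eq (A.flag_eq_of_rank_eq hF hG he)
  · exact (A.flag_lt_of_rank_lt hF hG hlt).le

lemma faceAt_adj (Ψ : Flag Face) {i : ℕ} (hi : i < n) {k : ℤ} (hk1 : -1 ≤ k)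
    (hk2 : k ≤ (n:ℤ)) (hne : k ≠ (i:ℤ)) :
    A.faceAt (A.adj Ψ i) k = A.faceAt Ψ k := by
  have h1 : A.faceAt Ψ k ∈ A.adj Ψ i :=
    A.adj_mem Ψ i hi _ (A.faceAt_mem Ψ k hk1 hk2) (by rw [A.faceAt_rank Ψ k hk1 hk2]; exact hne)
  have h2 := A.faceAt_eq (A.adj Ψ i) _ h1
  rwa [A.faceAt_rank Ψ k hk1 hk2] at h2

include A in
lemma eq_one_of_fix {g : Face ≃o Face} {Φ₀ : Flag Face} (h : g • Φ₀ = Φ₀) : g = 1 := by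
  have allflags : ∀ Ψ : Flag Face, g • Ψ = Ψ := by
    intro Ψ
    obtain ⟨L, c, h0, hL, hstep⟩ := A.connected Φ₀ Ψ
    have key : ∀ m, m ≤ L → g • c m = c m := by
      intro m
      induction m with
      | zero => intro _; rw [h0, h]
      | succ m ih =>
        intro hm
        obtain ⟨i, hi, hc, _⟩ := hstep m (by omega)
        rw [hc, A.smul_adj g (c m) i hi, ih (by omega)]
    rw [← hL]; exact key L le_rfl
  apply DFunLike.ext
  intro F
  obtain ⟨Ψ, hF⟩ := exists_flag_mem F
  have h1 : g F ∈ Ψ := by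
    rw [← allflags Ψ]; exact smul_mem_flag hF
  have h2 : A.faceAt Ψ (A.rank (g F)) = g F := A.faceAt_eq Ψ _ h1
  have h3 : A.faceAt Ψ (A.rank F) = F := A.faceAt_eq Ψ _ hF
  rw [A.rank_smul g F] at h2
  rw [← h2, h3]
  rfl

include A in
lemma smul_flag_injective {g g' : Face ≃o Face} {Φ₀ : Flag Face}
    (h : g • Φ₀ = g' • Φ₀) : g = g' := by
  have h1 : (g'⁻¹ * g) • Φ₀ = Φ₀ := by
    rw [mul_smul, h, inv_smul_smul]
  have := A.eq_one_of_fix h1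
  rw [inv_mul_eq_one] at this
  exact this.symm

end Aux


section Walk

variable {n : ℕ} {Face : Type*} [PartialOrder Face]

/-- nonnegative part of the flag walk in the polygonal section -/
def phiP (A : AbstractPolytope n Face) (Φ : Flag Face) (l : ℕ) : ℕ → Flag Face
  | 0 => Φ
  | k+1 => if Even k then A.adj (phiP A Φ l k) (l-1) else A.adj (phiP A Φ l k) l

/-- nonpositive part of the flag walk in the polygonal section -/
def phiM (A : AbstractPolytope n Face) (Φ : Flag Face) (l : ℕ) : ℕ → Flag Face
  | 0 => Φ
  | k+1 => if Even k then A.adj (phiM A Φ l k) l else A.adj (phiM A Φ l k) (l-1)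

/-- the flag walk in the polygonal section, indexed by `ℤ` -/
def phi (A : AbstractPolytope n Face) (Φ : Flag Face) (l : ℕ) (m : ℤ) : Flag Face :=
  if 0 ≤ m then phiP A Φ l m.toNat else phiM A Φ l (-m).toNat

variable (A : AbstractPolytope n Face) (Φ : Flag Face) {l : ℕ}

lemma phi_zero : phi A Φ l 0 = Φ := rfl

lemma phiP_succ (k : ℕ) : phiP A Φ l (k+1) =
    if Even k then A.adj (phiP A Φ l k) (l-1) else A.adj (phiP A Φ l k) l := rfl

lemma phiM_succ (k : ℕ) : phiM A Φ l (k+1) =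
    if Even k then A.adj (phiM A Φ l k) l else A.adj (phiM A Φ l k) (l-1) := rfl

lemma phi_succ (hln : l < n) (m : ℤ) :
    phi A Φ l (m + 1) =
      if Even m then A.adj (phi A Φ l m) (l-1) else A.adj (phi A Φ l m) l := by
  have hl' : l - 1 < n := lt_of_le_of_lt (Nat.sub_le l 1) hln
  rcases le_or_gt 0 m with hm | hm
  · have h1 : (0:ℤ) ≤ m + 1 := by omega
    have h2 : (m + 1).toNat = m.toNat + 1 := by omega
    have h3 : Even m.toNat ↔ Even m := by rw [Nat.even_iff, Int.even_iff]; omega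
    rw [phi, phi, if_pos h1, if_pos hm, h2, phiP_succ]
    by_cases he : Even m
    · rw [if_pos (h3.2 he), if_pos he]
    · rw [if_neg (fun h => he (h3.1 h)), if_neg he]
  · rcases eq_or_lt_of_le (by omega : m + 1 ≤ 0) with he0 | hneg
    · have hm1 : m = -1 := by omega
      subst hm1
      have hodd : ¬ Even (-1 : ℤ) := by decide
      rw [if_neg hodd]
      have hphi : phi A Φ l (-1) = A.adj Φ l := by
        rw [phi, if_neg (by omega)]
        norm_num
        rfl
      rw [hphi]
      norm_num
      exact (A.adj_invol Φ l hln).symm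
    · set k : ℕ := (-(m+1)).toNat with hk
      have hk1 : (-m).toNat = k + 1 := by omega
      have hm' : phi A Φ l m = phiM A Φ l (k+1) := by
        rw [phi, if_neg (by omega), hk1]
      have hm1' : phi A Φ l (m+1) = phiM A Φ l k := by
        rw [phi, if_neg (by omega), hk]
      have hke : Even k ↔ Even (m+1) := by rw [Nat.even_iff, Int.even_iff]; omega
      by_cases he : Even m
      · have hko : ¬ Even k := by
          rw [hke, Int.even_add_one]
          exact fun h => h he
        rw [if_pos he]
        have : phi A Φ l m = A.adj (phi A Φ l (m+1)) (l-1) := by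
          rw [hm', phiM_succ, if_neg hko, hm1']
        rw [this, A.adj_invol _ _ hl']
      · have hko : Even k := by
          rw [hke, Int.even_add_one]
          exact he
        rw [if_neg he]
        have : phi A Φ l m = A.adj (phi A Φ l (m+1)) l := by
          rw [hm', phiM_succ, if_pos hko, hm1']
        rw [this, A.adj_invol _ _ hln]

lemma phi_succ_even (hln : l < n) {m : ℤ} (he : Even m) :
    phi A Φ l (m + 1) = A.adj (phi A Φ l m) (l-1) := by
  rw [phi_succ A Φ hln m, if_pos he]

lemma phi_succ_odd (hln : l < n) {m : ℤ} (he : ¬ Even m) :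
    phi A Φ l (m + 1) = A.adj (phi A Φ l m) l := by
  rw [phi_succ A Φ hln m, if_neg he]

lemma phi_pred_even (hln : l < n) {m : ℤ} (he : Even m) :
    phi A Φ l (m - 1) = A.adj (phi A Φ l m) l := by
  have h1 : ¬ Even (m - 1) := by rw [Int.even_iff] at he ⊢; omega
  have h2 := phi_succ_odd A Φ hln h1
  rw [sub_add_cancel] at h2
  rw [h2, A.adj_invol _ _ hln]

lemma phi_pred_odd (hln : l < n) {m : ℤ} (he : ¬ Even m) :
    phi A Φ l (m - 1) = A.adj (phi A Φ l m) (l-1) := by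
  have hl' : l - 1 < n := lt_of_le_of_lt (Nat.sub_le l 1) hln
  have h1 : Even (m - 1) := by rw [Int.even_iff] at he ⊢; omega
  have h2 := phi_succ_even A Φ hln h1
  rw [sub_add_cancel] at h2
  rw [h2, A.adj_invol _ _ hl']


lemma phi_ne_odd_aux (hln : l < n) (e : ℕ) : ∀ m : ℤ,
    phi A Φ l m ≠ phi A Φ l (m + 2*e + 1) := by
  have hl' : l - 1 < n := lt_of_le_of_lt (Nat.sub_le l 1) hln
  induction e with
  | zero =>
    intro m h
    rcases Int.even_or_odd m with he | ho
    · have := phi_succ_even A Φ hln he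
      rw [show m + 2*(0:ℕ) + 1 = m + 1 by push_cast; ring, this] at h
      exact A.adj_ne _ _ hl' h.symm
    · have ho' : ¬ Even m := by rw [Int.even_iff]; rcases ho with ⟨c, hc⟩; omega
      have := phi_succ_odd A Φ hln ho'
      rw [show m + 2*(0:ℕ) + 1 = m + 1 by push_cast; ring, this] at h
      exact A.adj_ne _ _ hln h.symm
  | succ e ih =>
    intro m h
    push_cast at h
    apply ih (m + 1)
    rcases Int.even_or_odd m with he | ho
    · have h1 := phi_succ_even A Φ hln he
      have ho2 : ¬ Even (m + 2*((e:ℤ)+1) + 1) := by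
        rw [Int.even_iff] at he ⊢; omega
      have h2 := phi_pred_odd A Φ hln ho2
      rw [h1, h, ← h2]
      congr 1
      push_cast
      ring
    · have ho' : ¬ Even m := by rw [Int.even_iff]; rcases ho with ⟨c, hc⟩; omega
      have h1 := phi_succ_odd A Φ hln ho'
      have he2 : Even (m + 2*((e:ℤ)+1) + 1) := by
        rw [Int.even_iff] at ho' ⊢; omega
      have h2 := phi_pred_even A Φ hln he2
      rw [h1, h, ← h2]
      congr 1
      push_cast
      ring

lemma phi_eq_even (hln : l < n) {m m' : ℤ} (h : phi A Φ l m = phi A Φ l m') :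
    Even (m - m') := by
  by_contra hodd
  rcases le_or_gt m m' with hle | hlt
  · obtain ⟨e, he⟩ : ∃ e : ℕ, m' = m + 2*e + 1 := by
      refine ⟨(m' - m - 1).toNat / 2, ?_⟩
      rw [Int.even_iff] at hodd
      omega
    exact phi_ne_odd_aux A Φ hln e m (by rw [← he]; exact h)
  · obtain ⟨e, he⟩ : ∃ e : ℕ, m = m' + 2*e + 1 := by
      refine ⟨(m - m' - 1).toNat / 2, ?_⟩
      rw [Int.even_iff] at hodd
      omega
    exact phi_ne_odd_aux A Φ hln e m' (by rw [← he]; exact h.symm)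

lemma phi_shift (hln : l < n) {m m' : ℤ} (h : phi A Φ l m = phi A Φ l m') :
    ∀ k : ℤ, phi A Φ l (m + k) = phi A Φ l (m' + k) := by
  have hpar : ∀ k : ℤ, Even (m + k) ↔ Even (m' + k) := by
    intro k
    have := phi_eq_even A Φ hln h
    rw [Int.even_iff] at this ⊢
    rw [Int.even_iff]
    omega
  intro k
  induction k using Int.induction_on with
  | zero => simpa using h
  | succ k ih =>
    have e1 : m + ((k:ℤ) + 1) = (m + k) + 1 := by ring
    have e2 : m' + ((k:ℤ) + 1) = (m' + k) + 1 := by ring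
    rw [e1, e2]
    by_cases he : Even (m + (k:ℤ))
    · rw [phi_succ_even A Φ hln he, phi_succ_even A Φ hln ((hpar k).1 he), ih]
    · rw [phi_succ_odd A Φ hln he, phi_succ_odd A Φ hln (fun hc => he ((hpar k).2 hc)), ih]
  | pred k ih =>
    have e1 : m + (-(k:ℤ) - 1) = (m + -(k:ℤ)) - 1 := by ring
    have e2 : m' + (-(k:ℤ) - 1) = (m' + -(k:ℤ)) - 1 := by ring
    rw [e1, e2]
    by_cases he : Even (m + -(k:ℤ))
    · rw [phi_pred_even A Φ hln he, phi_pred_even A Φ hln ((hpar _).1 he), ih]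
    · rw [phi_pred_odd A Φ hln he, phi_pred_odd A Φ hln (fun hc => he ((hpar _).2 hc)), ih]

lemma exists_period (hln : l < n) :
    ∃ d : ℕ, ∀ e : ℤ, ((d:ℤ) ∣ e ↔ ∀ m, phi A Φ l (m + e) = phi A Φ l m) := by
  let P : AddSubgroup ℤ :=
    { carrier := {e | ∀ m, phi A Φ l (m + e) = phi A Φ l m}
      zero_mem' := by intro m; rw [add_zero]
      add_mem' := by
        intro x y hx hy m
        have e1 : m + (x + y) = (m + y) + x := by ring
        rw [e1, hx (m + y), hy m]
      neg_mem' := by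
        intro x hx m
        have := hx (m + -x)
        rw [show m + -x + x = m by ring] at this
        exact this.symm }
  obtain ⟨a, ha⟩ := Int.subgroup_cyclic P
  refine ⟨a.natAbs, fun e => ?_⟩
  have hmem : e ∈ P ↔ a ∣ e := by
    rw [ha, AddSubgroup.mem_closure_singleton]
    constructor
    · rintro ⟨k, rfl⟩; exact ⟨k, by rw [zsmul_eq_mul, Int.cast_id]; ring⟩
    · rintro ⟨k, rfl⟩; exact ⟨k, by rw [zsmul_eq_mul, Int.cast_id]; ring⟩
  rw [Int.natAbs_dvd, ← hmem]
  rfl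

lemma phi_eq_iff (hln : l < n) {d : ℕ}
    (hd : ∀ e : ℤ, ((d:ℤ) ∣ e ↔ ∀ m, phi A Φ l (m + e) = phi A Φ l m))
    (m m' : ℤ) : phi A Φ l m = phi A Φ l m' ↔ (d:ℤ) ∣ (m - m') := by
  constructor
  · intro h
    rw [hd]
    intro j
    have h1 := phi_shift A Φ hln h.symm (j - m')
    rw [show m' + (j - m') = j by ring, show m + (j - m') = j + (m - m') by ring] at h1
    exact h1.symm
  · intro h
    have h1 := (hd _).1 h m'
    rwa [show m' + (m - m') = m by ring] at h1


lemma phi_mem (hl1 : 1 ≤ l) (hln : l < n) (m : ℤ) :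
    ∀ F ∈ Φ, A.rank F ≠ (l:ℤ) - 1 → A.rank F ≠ (l:ℤ) → F ∈ phi A Φ l m := by
  have hl' : l - 1 < n := lt_of_le_of_lt (Nat.sub_le l 1) hln
  have hcast : ((l - 1 : ℕ) : ℤ) = (l:ℤ) - 1 := by omega
  induction m using Int.induction_on with
  | zero => intro F hF _ _; exact hF
  | succ k ih =>
    intro F hF h1 h2
    by_cases he : Even (k:ℤ)
    · rw [phi_succ_even A Φ hln he]
      exact A.adj_mem _ _ hl' F (ih F hF h1 h2) (by rw [hcast]; exact h1)
    · rw [phi_succ_odd A Φ hln he]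
      exact A.adj_mem _ _ hln F (ih F hF h1 h2) h2
  | pred k ih =>
    intro F hF h1 h2
    by_cases he : Even (-(k:ℤ))
    · rw [phi_pred_even A Φ hln he]
      exact A.adj_mem _ _ hln F (ih F hF h1 h2) h2
    · rw [phi_pred_odd A Φ hln he]
      exact A.adj_mem _ _ hl' F (ih F hF h1 h2) (by rw [hcast]; exact h1)

lemma faceAt_phi (hl1 : 1 ≤ l) (hln : l < n) (m : ℤ) {k : ℤ} (hk1 : -1 ≤ k)
    (hk2 : k ≤ (n:ℤ)) (h1 : k ≠ (l:ℤ) - 1) (h2 : k ≠ (l:ℤ)) :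
    A.faceAt (phi A Φ l m) k = A.faceAt Φ k := by
  have hF : A.faceAt Φ k ∈ phi A Φ l m := by
    apply phi_mem A Φ hl1 hln m _ (A.faceAt_mem Φ k hk1 hk2) <;>
      rw [A.faceAt_rank Φ k hk1 hk2] <;> assumption
  have h3 := A.faceAt_eq (phi A Φ l m) _ hF
  rwa [A.faceAt_rank Φ k hk1 hk2] at h3

lemma secFace_cond (hl1 : 1 ≤ l) (hln : l < n) (m : ℤ) :
    A.faceAt Φ ((l:ℤ) - 2) ≤ A.faceAt (phi A Φ l m) (l:ℤ) ∧
    A.faceAt (phi A Φ l m) (l:ℤ) ≤ A.faceAt Φ ((l:ℤ) + 1) ∧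
    A.rank (A.faceAt (phi A Φ l m) (l:ℤ)) = (l:ℤ) := by
  have hb1 : (-1:ℤ) ≤ (l:ℤ) - 2 := by omega
  have hb2 : (l:ℤ) - 2 ≤ (n:ℤ) := by omega
  have hb3 : (-1:ℤ) ≤ (l:ℤ) + 1 := by omega
  have hb4 : (l:ℤ) + 1 ≤ (n:ℤ) := by omega
  have hbl1 : (-1:ℤ) ≤ (l:ℤ) := by omega
  have hbl2 : (l:ℤ) ≤ (n:ℤ) := by omega
  have e1 : A.faceAt (phi A Φ l m) ((l:ℤ) - 2) = A.faceAt Φ ((l:ℤ) - 2) :=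
    faceAt_phi A Φ hl1 hln m hb1 hb2 (by omega) (by omega)
  have e2 : A.faceAt (phi A Φ l m) ((l:ℤ) + 1) = A.faceAt Φ ((l:ℤ) + 1) :=
    faceAt_phi A Φ hl1 hln m hb3 hb4 (by omega) (by omega)
  refine ⟨?_, ?_, A.faceAt_rank _ _ hbl1 hbl2⟩
  · rw [← e1]
    apply A.flag_le_of_rank_le (A.faceAt_mem _ _ hb1 hb2) (A.faceAt_mem _ _ hbl1 hbl2)
    rw [A.faceAt_rank _ _ hb1 hb2, A.faceAt_rank _ _ hbl1 hbl2]
    omega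
  · rw [← e2]
    apply A.flag_le_of_rank_le (A.faceAt_mem _ _ hbl1 hbl2) (A.faceAt_mem _ _ hb3 hb4)
    rw [A.faceAt_rank _ _ hb3 hb4, A.faceAt_rank _ _ hbl1 hbl2]
    omega

lemma secFace_pair (hl1 : 1 ≤ l) (hln : l < n) {m : ℤ} (he : Even m) :
    A.faceAt (phi A Φ l (m+1)) (l:ℤ) = A.faceAt (phi A Φ l m) (l:ℤ) := by
  have hl' : l - 1 < n := lt_of_le_of_lt (Nat.sub_le l 1) hln
  rw [phi_succ_even A Φ hln he]
  exact A.faceAt_adj _ hl' (by omega) (by omega) (by omega)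

lemma secFace_fiber (hl1 : 1 ≤ l) (hln : l < n) {m m' : ℤ}
    (h : A.faceAt (phi A Φ l m) (l:ℤ) = A.faceAt (phi A Φ l m') (l:ℤ)) :
    phi A Φ l m = phi A Φ l m' ∨ phi A Φ l m' = A.adj (phi A Φ l m) (l-1) := by
  have hl' : l - 1 < n := lt_of_le_of_lt (Nat.sub_le l 1) hln
  have hcast : ((l - 1 : ℕ) : ℤ) = (l:ℤ) - 1 := by omega
  by_cases heq : phi A Φ l m = phi A Φ l m'
  · exact Or.inl heq
  · right
    apply A.adj_unique (phi A Φ l m) (phi A Φ l m') (l-1) hl' (Ne.symm heq)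
    intro F hF hr
    rw [hcast] at hr
    by_cases hFl : A.rank F = (l:ℤ)
    · have h1 : F = A.faceAt (phi A Φ l m) (l:ℤ) := by
        have := A.faceAt_eq (phi A Φ l m) F hF
        rw [hFl] at this
        exact this.symm
      rw [h1, h]
      exact A.faceAt_mem _ _ (by omega) (by omega)
    · have hb := A.rank_le F
      have h1 : F = A.faceAt Φ (A.rank F) := by
        have h2 := A.faceAt_eq (phi A Φ l m) F hF
        conv_lhs => rw [← h2]
        exact faceAt_phi A Φ hl1 hln m hb.1 hb.2 hr hFl
      rw [h1]
      apply phi_mem A Φ hl1 hln m' _ (A.faceAt_mem Φ _ hb.1 hb.2) <;>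
        rw [A.faceAt_rank Φ _ hb.1 hb.2] <;> assumption

lemma secFace_inj_even (hl1 : 1 ≤ l) (hln : l < n) {d : ℕ}
    (hd : ∀ e : ℤ, ((d:ℤ) ∣ e ↔ ∀ m, phi A Φ l (m + e) = phi A Φ l m))
    {m m' : ℤ} (hm : Even m) (hm' : Even m')
    (h : A.faceAt (phi A Φ l m) (l:ℤ) = A.faceAt (phi A Φ l m') (l:ℤ)) :
    (d:ℤ) ∣ m - m' := by
  rcases secFace_fiber A Φ hl1 hln h with h1 | h1
  · exact (phi_eq_iff A Φ hln hd m m').1 h1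
  · exfalso
    rw [← phi_succ_even A Φ hln hm] at h1
    have := phi_eq_even A Φ hln h1
    rw [Int.even_iff] at this hm hm'
    omega

lemma secFace_reduce_odd (hl1 : 1 ≤ l) (hln : l < n) {m : ℤ} (hm : ¬ Even m) :
    A.faceAt (phi A Φ l m) (l:ℤ) = A.faceAt (phi A Φ l (m-1)) (l:ℤ) := by
  have he : Even (m - 1) := by rw [Int.even_iff] at hm ⊢; omega
  have := secFace_pair A Φ hl1 hln he
  rw [sub_add_cancel] at this
  exact this

lemma phi_reach (hl1 : 1 ≤ l) (hln : l < n) (Ψ : Flag Face)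
    (hΨ : ∀ F ∈ Φ, A.rank F ≠ (l:ℤ) - 1 → A.rank F ≠ (l:ℤ) → F ∈ Ψ) :
    ∃ m : ℤ, phi A Φ l m = Ψ := by
  obtain ⟨L, c, h0, hL, hstep⟩ := A.connected Φ Ψ
  suffices key : ∀ j, j ≤ L → ∃ m, phi A Φ l m = c j by
    rw [← hL]; exact key L le_rfl
  intro j
  induction j with
  | zero => exact fun _ => ⟨0, by rw [phi_zero, h0]⟩
  | succ j ih =>
    intro hj
    obtain ⟨i, hi, hc, hcom⟩ := hstep j (by omega)
    obtain ⟨m, hm⟩ := ih (by omega)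
    have hil : i = l - 1 ∨ i = l := by
      by_contra hcon
      push_neg at hcon
      have h1 : ((i:ℤ)) ≠ (l:ℤ) - 1 := by omega
      have h2 : ((i:ℤ)) ≠ (l:ℤ) := by omega
      have hb1 : (-1:ℤ) ≤ (i:ℤ) := by omega
      have hb2 : ((i:ℤ)) ≤ (n:ℤ) := by omega
      have hF := A.faceAt_mem Φ (i:ℤ) hb1 hb2
      have hFr := A.faceAt_rank Φ (i:ℤ) hb1 hb2
      have hmem : A.faceAt Φ (i:ℤ) ∈ Ψ :=
        hΨ _ hF (by rw [hFr]; exact h1) (by rw [hFr]; exact h2)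
      exact (hcom _ hF hmem) hFr
    rcases hil with rfl | rfl
    · by_cases he : Even m
      · exact ⟨m + 1, by rw [phi_succ_even A Φ hln he, hc, hm]⟩
      · exact ⟨m - 1, by rw [phi_pred_odd A Φ hln he, hc, hm]⟩
    · by_cases he : Even m
      · exact ⟨m - 1, by rw [phi_pred_even A Φ hln he, hc, hm]⟩
      · exact ⟨m + 1, by rw [phi_succ_odd A Φ hln he, hc, hm]⟩

lemma exists_phi_face (hl1 : 1 ≤ l) (hln : l < n) (H : Face)
    (h1 : A.faceAt Φ ((l:ℤ) - 2) ≤ H) (h2 : H ≤ A.faceAt Φ ((l:ℤ) + 1))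
    (h3 : A.rank H = (l:ℤ)) :
    ∃ m : ℤ, A.faceAt (phi A Φ l m) (l:ℤ) = H := by
  have hb1 : (-1:ℤ) ≤ (l:ℤ) - 2 := by omega
  have hb2 : (l:ℤ) - 2 ≤ (n:ℤ) := by omega
  have hb3 : (-1:ℤ) ≤ (l:ℤ) + 1 := by omega
  have hb4 : (l:ℤ) + 1 ≤ (n:ℤ) := by omega
  have hchain : IsChain (· ≤ ·)
      ({F | F ∈ Φ ∧ A.rank F ≠ (l:ℤ) - 1 ∧ A.rank F ≠ (l:ℤ)} ∪ {H}) := by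
    rintro x (⟨hx, hx1, hx2⟩ | rfl) y (⟨hy, hy1, hy2⟩ | rfl) hne
    · exact Φ.le_or_le hx hy
    · rcases lt_or_ge (A.rank x) (l:ℤ) with hlt | hge
      · left
        calc x ≤ A.faceAt Φ ((l:ℤ) - 2) := by
              apply A.flag_le_of_rank_le hx (A.faceAt_mem Φ _ hb1 hb2)
              rw [A.faceAt_rank Φ _ hb1 hb2]; omega
          _ ≤ y := h1
      · right
        calc y ≤ A.faceAt Φ ((l:ℤ) + 1) := h2
          _ ≤ x := by
              apply A.flag_le_of_rank_le (A.faceAt_mem Φ _ hb3 hb4) hx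
              rw [A.faceAt_rank Φ _ hb3 hb4]; omega
    · rcases lt_or_ge (A.rank y) (l:ℤ) with hlt | hge
      · right
        calc y ≤ A.faceAt Φ ((l:ℤ) - 2) := by
              apply A.flag_le_of_rank_le hy (A.faceAt_mem Φ _ hb1 hb2)
              rw [A.faceAt_rank Φ _ hb1 hb2]; omega
          _ ≤ x := h1
      · left
        calc x ≤ A.faceAt Φ ((l:ℤ) + 1) := h2
          _ ≤ y := by
              apply A.flag_le_of_rank_le (A.faceAt_mem Φ _ hb3 hb4) hy
              rw [A.faceAt_rank Φ _ hb3 hb4]; omega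
    · exact absurd rfl hne
  obtain ⟨M, hM, hsub⟩ := hchain.exists_maxChain
  have hΨ : ∀ F ∈ Φ, A.rank F ≠ (l:ℤ) - 1 → A.rank F ≠ (l:ℤ) →
      F ∈ Flag.ofIsMaxChain M hM := fun F hF a b => hsub (Or.inl ⟨hF, a, b⟩)
  have hHΨ : H ∈ Flag.ofIsMaxChain M hM := hsub (Or.inr rfl)
  obtain ⟨m, hm⟩ := phi_reach A Φ hl1 hln _ hΨ
  refine ⟨m, ?_⟩
  rw [hm]
  have h4 := A.faceAt_eq (Flag.ofIsMaxChain M hM) H hHΨ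
  rwa [h3] at h4

lemma card_section (hl1 : 1 ≤ l) (hln : l < n) {d : ℕ}
    (hd : ∀ e : ℤ, ((d:ℤ) ∣ e ↔ ∀ m, phi A Φ l (m + e) = phi A Φ l m)) :
    2 * Nat.card {H : Face // A.faceAt Φ ((l : ℤ) - 2) ≤ H ∧
      H ≤ A.faceAt Φ ((l : ℤ) + 1) ∧ A.rank H = (l : ℤ)} = d := by
  set T := {H : Face // A.faceAt Φ ((l : ℤ) - 2) ≤ H ∧
      H ≤ A.faceAt Φ ((l : ℤ) + 1) ∧ A.rank H = (l : ℤ)} with hT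
  show 2 * Nat.card T = d
  rcases Nat.eq_zero_or_pos d with rfl | hdpos
  · have hinf : Function.Injective (fun k : ℤ =>
        (⟨A.faceAt (phi A Φ l (2*k)) (l:ℤ), secFace_cond A Φ hl1 hln (2*k)⟩ : T)) := by
      intro k k' h
      have h2 := secFace_inj_even A Φ hl1 hln hd (m := 2*k) (m' := 2*k')
        ⟨k, by ring⟩ ⟨k', by ring⟩ (congrArg Subtype.val h)
      rw [Nat.cast_zero, zero_dvd_iff] at h2
      omega
    haveI : Infinite T := Infinite.of_injective _ hinf
    rw [Nat.card_eq_zero_of_infinite]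
  · -- d positive, and even
    have hdeven : Even (d:ℤ) := by
      have h0 : phi A Φ l ((0:ℤ) + (d:ℤ)) = phi A Φ l 0 := ((hd (d:ℤ)).1 dvd_rfl) 0
      rw [zero_add] at h0
      have := phi_eq_even A Φ hln h0
      simpa using this
    obtain ⟨c, hc⟩ : ∃ c : ℕ, d = 2 * c := by
      rw [Int.even_iff] at hdeven
      exact ⟨d / 2, by omega⟩
    have hf : Function.Bijective (fun j : Fin c =>
        (⟨A.faceAt (phi A Φ l (2*(j:ℕ))) (l:ℤ), secFace_cond A Φ hl1 hln _⟩ : T)) := by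
      constructor
      · intro j j' h
        have h2 := secFace_inj_even A Φ hl1 hln hd (m := 2*((j:ℕ):ℤ)) (m' := 2*((j':ℕ):ℤ))
          ⟨(j:ℕ), by ring⟩ ⟨(j':ℕ), by ring⟩ (by exact_mod_cast congrArg Subtype.val h)
        obtain ⟨t, ht⟩ := h2
        have hj1 : ((j:ℕ):ℤ) < c := by exact_mod_cast j.2
        have hj2 : ((j':ℕ):ℤ) < c := by exact_mod_cast j'.2
        have hd2 : ((d:ℕ):ℤ) = 2 * (c:ℤ) := by exact_mod_cast hc
        have ht0 : t = 0 := by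
          rcases lt_trichotomy t 0 with h | h | h
          · nlinarith [ht, hd2]
          · exact h
          · nlinarith [ht, hd2]
        rw [ht0, mul_zero] at ht
        have : ((j:ℕ):ℤ) = ((j':ℕ):ℤ) := by omega
        exact Fin.ext (by exact_mod_cast this)
      · rintro ⟨H, h1, h2, h3⟩
        obtain ⟨m, hm⟩ := exists_phi_face A Φ hl1 hln H h1 h2 h3
        set r : ℤ := m % (d:ℤ) with hr
        have hdvd : ((d:ℕ):ℤ) ∣ m - r := by
          rw [hr, Int.emod_def]; ring_nf; exact ⟨m / d, by ring⟩
        have hr0 : 0 ≤ r := Int.emod_nonneg m (by exact_mod_cast hdpos.ne')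
        have hrd : r < (d:ℤ) := Int.emod_lt_of_pos m (by exact_mod_cast hdpos)
        have hphir : phi A Φ l m = phi A Φ l r := (phi_eq_iff A Φ hln hd m r).2 hdvd
        have hfr : A.faceAt (phi A Φ l r) (l:ℤ) = H := by rw [← hphir, hm]
        by_cases he : Even r
        · obtain ⟨j1, hj1⟩ : ∃ j1 : ℕ, r = 2 * (j1:ℤ) ∧ j1 < c := by
            rw [Int.even_iff] at he
            refine ⟨r.toNat / 2, by omega, by omega⟩
          refine ⟨⟨j1, hj1.2⟩, Subtype.ext ?_⟩
          show A.faceAt (phi A Φ l (2*((j1:ℕ):ℤ))) (l:ℤ) = H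
          rw [show (2*((j1:ℕ):ℤ)) = r by omega, hfr]
        · obtain ⟨j1, hj1⟩ : ∃ j1 : ℕ, r - 1 = 2 * (j1:ℤ) ∧ j1 < c := by
            rw [Int.not_even_iff] at he
            refine ⟨(r-1).toNat / 2, by omega, by omega⟩
          refine ⟨⟨j1, hj1.2⟩, Subtype.ext ?_⟩
          show A.faceAt (phi A Φ l (2*((j1:ℕ):ℤ))) (l:ℤ) = H
          rw [show (2*((j1:ℕ):ℤ)) = r - 1 by omega, ← secFace_reduce_odd A Φ hl1 hln he, hfr]
    have := Nat.card_eq_of_bijective _ hf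
    rw [Nat.card_eq_fintype_card, Fintype.card_fin] at this
    rw [hT]
    omega


lemma smul_phi_odd (hln : l < n) {g : Face ≃o Face} {u : ℤ} (hu : ¬ Even u)
    (hg : g • Φ = phi A Φ l u) : ∀ m : ℤ, g • phi A Φ l m = phi A Φ l (u - m) := by
  have hl' : l - 1 < n := lt_of_le_of_lt (Nat.sub_le l 1) hln
  intro m
  induction m using Int.induction_on with
  | zero => rw [phi_zero, sub_zero]; exact hg
  | succ k ih =>
    by_cases he : Even (k:ℤ)
    · rw [phi_succ_even A Φ hln he, A.smul_adj g _ _ hl', ih]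
      have ho : ¬ Even (u - (k:ℤ)) := by
        rw [Int.even_iff] at he; rw [Int.not_even_iff] at hu ⊢; omega
      rw [← phi_pred_odd A Φ hln ho]
      congr 1; ring
    · rw [phi_succ_odd A Φ hln he, A.smul_adj g _ _ hln, ih]
      have hev : Even (u - (k:ℤ)) := by
        rw [Int.not_even_iff] at he hu; rw [Int.even_iff]; omega
      rw [← phi_pred_even A Φ hln hev]
      congr 1; ring
  | pred k ih =>
    by_cases he : Even (-(k:ℤ))
    · rw [phi_pred_even A Φ hln he, A.smul_adj g _ _ hln, ih]
      have ho : ¬ Even (u - -(k:ℤ)) := by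
        rw [Int.even_iff] at he; rw [Int.not_even_iff] at hu ⊢; omega
      rw [← phi_succ_odd A Φ hln ho]
      congr 1; ring
    · rw [phi_pred_odd A Φ hln he, A.smul_adj g _ _ hl', ih]
      have hev : Even (u - -(k:ℤ)) := by
        rw [Int.not_even_iff] at he hu; rw [Int.even_iff]; omega
      rw [← phi_succ_even A Φ hln hev]
      congr 1; ring

lemma smul_phi_even (hln : l < n) {g : Face ≃o Face} {u : ℤ} (hu : Even u)
    (hg : g • Φ = phi A Φ l u) : ∀ m : ℤ, g • phi A Φ l m = phi A Φ l (u + m) := by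
  have hl' : l - 1 < n := lt_of_le_of_lt (Nat.sub_le l 1) hln
  intro m
  induction m using Int.induction_on with
  | zero => rw [phi_zero, add_zero]; exact hg
  | succ k ih =>
    by_cases he : Even (k:ℤ)
    · rw [phi_succ_even A Φ hln he, A.smul_adj g _ _ hl', ih]
      have hev : Even (u + (k:ℤ)) := hu.add he
      rw [← phi_succ_even A Φ hln hev]
      congr 1; ring
    · rw [phi_succ_odd A Φ hln he, A.smul_adj g _ _ hln, ih]
      have ho : ¬ Even (u + (k:ℤ)) := by
        rw [Int.even_iff] at hu; rw [Int.not_even_iff] at he ⊢; omega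
      rw [← phi_succ_odd A Φ hln ho]
      congr 1; ring
  | pred k ih =>
    by_cases he : Even (-(k:ℤ))
    · rw [phi_pred_even A Φ hln he, A.smul_adj g _ _ hln, ih]
      have hev : Even (u + -(k:ℤ)) := hu.add he
      rw [← phi_pred_even A Φ hln hev]
      congr 1; ring
    · rw [phi_pred_odd A Φ hln he, A.smul_adj g _ _ hl', ih]
      have ho : ¬ Even (u + -(k:ℤ)) := by
        rw [Int.even_iff] at hu; rw [Int.not_even_iff] at he ⊢; omega
      rw [← phi_pred_odd A Φ hln ho]
      congr 1; ring

lemma phi_one (hln : l < n) : phi A Φ l 1 = A.adj Φ (l-1) := by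
  have h := phi_succ_even A Φ hln (m := 0) (by norm_num)
  rwa [phi_zero, zero_add] at h

lemma phi_two (hln : l < n) : phi A Φ l 2 = A.adj (A.adj Φ (l-1)) l := by
  have h := phi_succ_odd A Φ hln (m := 1) (by norm_num)
  rw [phi_one A Φ hln] at h
  norm_num at h
  exact h

lemma phi_three (hln : l < n) :
    phi A Φ l 3 = A.adj (A.adj (A.adj Φ (l-1)) l) (l-1) := by
  have h := phi_succ_even A Φ hln (m := 2) (by norm_num)
  rw [phi_two A Φ hln] at h
  norm_num at h
  exact h

lemma phi_neg_one (hln : l < n) : phi A Φ l (-1) = A.adj Φ l := by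
  have h := phi_pred_even A Φ hln (m := 0) (by norm_num)
  rwa [phi_zero, zero_sub] at h

lemma phi_neg_two (hln : l < n) : phi A Φ l (-2) = A.adj (A.adj Φ l) (l-1) := by
  have h := phi_pred_odd A Φ hln (m := -1) (by norm_num)
  rw [phi_neg_one A Φ hln] at h
  norm_num at h
  exact h

lemma phi_neg_three (hln : l < n) :
    phi A Φ l (-3) = A.adj (A.adj (A.adj Φ l) (l-1)) l := by
  have h := phi_pred_even A Φ hln (m := -2) (by norm_num)
  rw [phi_neg_two A Φ hln] at h
  norm_num at h
  exact h

end Walk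


section Orbits

variable {n : ℕ} {Face : Type*} [PartialOrder Face]

lemma sameOrbit_refl (Ψ : Flag Face) : SameOrbit Ψ Ψ := ⟨1, one_smul _ _⟩

lemma sameOrbit_symm {X Y : Flag Face} (h : SameOrbit X Y) : SameOrbit Y X := by
  obtain ⟨g, hg⟩ := h
  exact ⟨g⁻¹, by rw [← hg, inv_smul_smul]⟩

lemma sameOrbit_trans {X Y Z : Flag Face} (h1 : SameOrbit X Y) (h2 : SameOrbit Y Z) :
    SameOrbit X Z := by
  obtain ⟨g, hg⟩ := h1
  obtain ⟨k, hk⟩ := h2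
  exact ⟨k * g, by rw [mul_smul, hg, hk]⟩

variable (A : AbstractPolytope n Face)

lemma class_of_exists {I : Set ℕ} (h2 : A.TwoOrbit) (hI : A.InClass I) {i : ℕ} (hi : i < n)
    {Φ₀ : Flag Face} (hex : SameOrbit Φ₀ (A.adj Φ₀ i)) : i ∈ I := by
  rw [hI.2 i hi]
  intro Ψ
  by_cases hcase : SameOrbit Ψ Φ₀
  · obtain ⟨k, hk⟩ := hcase
    obtain ⟨g, hg⟩ := hex
    refine ⟨k⁻¹ * (g * k), ?_⟩
    rw [mul_smul, mul_smul, hk, hg, A.smul_adj k⁻¹ _ i hi]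
    congr 1
    rw [← hk, inv_smul_smul]
  · by_cases hcase2 : SameOrbit Ψ (A.adj Ψ i)
    · exact hcase2
    · exfalso
      apply hcase
      have h3 : SameOrbit (A.adj Ψ i) Φ₀ := by
        obtain ⟨Φ₁, Φ₂, hne, hall⟩ := h2
        rcases hall Φ₀ with p0 | p0 <;> rcases hall Ψ with p1 | p1 <;>
          rcases hall (A.adj Ψ i) with p2 | p2
        all_goals first
          | exact sameOrbit_trans p2 (sameOrbit_symm p0)
          | exact absurd (sameOrbit_trans p1 (sameOrbit_symm p0)) hcase
          | exact absurd (sameOrbit_trans p1 (sameOrbit_symm p2)) hcase2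
      obtain ⟨k, hk⟩ := h3
      have h4 : A.adj (k • Ψ) i = Φ₀ := by rw [← A.smul_adj k Ψ i hi, hk]
      have h5 : k • Ψ = A.adj Φ₀ i := by rw [← h4, A.adj_invol _ i hi]
      exact sameOrbit_trans ⟨k, h5⟩ (sameOrbit_symm hex)

end Orbits


section Core

variable {n : ℕ} {Face : Type*} [PartialOrder Face]

lemma core_dihedral (A : AbstractPolytope n Face) (Φ : Flag Face) {l : ℕ}
    (hl1 : 1 ≤ l) (hln : l < n) (r s : Face ≃o Face) (u : ℤ) (hu : ¬ Even u)
    (hr : r • Φ = phi A Φ l u) (hs : s • Φ = phi A Φ l (u - 4))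
    (hforb : ∀ g : Face ≃o Face, g • Φ ≠ phi A Φ l (u - 2))
    (p : ℕ)
    (hp : p = Nat.card {H : Face // A.faceAt Φ ((l : ℤ) - 2) ≤ H ∧
        H ≤ A.faceAt Φ ((l : ℤ) + 1) ∧ A.rank H = (l : ℤ)}) :
    Even p ∧ Nonempty ((Subgroup.closure {r, s} : Subgroup (Face ≃o Face))
      ≃* DihedralGroup (p / 2)) := by
  obtain ⟨d, hd⟩ := exists_period A Φ (l := l) hln
  have hcard : 2 * p = d := by rw [hp]; exact card_section A Φ hl1 hln hd
  set t := r * s with ht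
  have hrphi : ∀ m, r • phi A Φ l m = phi A Φ l (u - m) := smul_phi_odd A Φ hln hu hr
  have ht4 : t • Φ = phi A Φ l 4 := by
    rw [ht, mul_smul, hs, hrphi]
    congr 1; ring
  have htphi : ∀ m, t • phi A Φ l m = phi A Φ l (4 + m) :=
    smul_phi_even A Φ hln (⟨2, by norm_num⟩ : Even (4:ℤ)) ht4
  have htzphi : ∀ (k : ℤ) (m : ℤ), t ^ k • phi A Φ l m = phi A Φ l (4 * k + m) := by
    have hinv : ∀ m, t⁻¹ • phi A Φ l m = phi A Φ l (m - 4) := by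
      intro m
      have := htphi (m - 4)
      rw [show 4 + (m - 4) = m by ring] at this
      rw [← this, inv_smul_smul]
    intro k
    induction k using Int.induction_on with
    | zero => intro m; rw [zpow_zero, one_smul]; congr 1; ring
    | succ k ih =>
      intro m
      have h1 : t ^ ((k:ℤ) + 1) = t * t ^ (k:ℤ) := by
        rw [zpow_add, zpow_one]; exact ((Commute.refl t).zpow_left (k:ℤ)).eq
      rw [h1, mul_smul, ih, htphi]
      congr 1; ring
    | pred k ih =>
      intro m
      have h1 : t ^ (-(k:ℤ) - 1) = t⁻¹ * t ^ (-(k:ℤ)) := by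
        rw [sub_eq_add_neg, add_comm, zpow_add, zpow_neg_one]
      rw [h1, mul_smul, ih, hinv]
      congr 1; ring
  have htz : ∀ k : ℤ, t ^ k • Φ = phi A Φ l (4 * k) := by
    intro k
    have := htzphi k 0
    rwa [phi_zero, add_zero] at this
  have hr2 : r * r = 1 := by
    apply A.smul_flag_injective (Φ₀ := Φ)
    rw [mul_smul, hr, hrphi, sub_self, phi_zero, one_smul]
  have hconj : ∀ k : ℤ, r * t ^ k * r = t ^ (-k) := by
    intro k
    apply A.smul_flag_injective (Φ₀ := Φ)
    rw [mul_smul, mul_smul, hr, htzphi k u, hrphi, htz (-k)]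
    congr 1; ring
  have hpeven : Even p := by
    rw [Nat.even_iff]
    by_contra hodd
    have hodd' : p % 2 = 1 := by omega
    obtain ⟨e, he⟩ : ∃ e : ℕ, p = 2 * e + 1 := ⟨p / 2, by omega⟩
    apply hforb (r * t ^ ((e:ℤ) + 1))
    rw [mul_smul, htz, hrphi]
    apply (phi_eq_iff A Φ hln hd _ _).2
    refine ⟨-1, ?_⟩
    have hdval : (d:ℤ) = 4 * (e:ℤ) + 2 := by omega
    rw [hdval]; ring
  obtain ⟨q, hq⟩ : ∃ q : ℕ, p = 2 * q := by
    rw [Nat.even_iff] at hpeven; exact ⟨p / 2, by omega⟩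
  have hq2 : p / 2 = q := by omega
  have hd4 : (d:ℤ) = 4 * (q:ℤ) := by omega
  have hrG : r ∈ Subgroup.closure {r, s} := Subgroup.subset_closure (by left; rfl)
  have hsG : s ∈ Subgroup.closure {r, s} := Subgroup.subset_closure (by right; rfl)
  have htG : t ∈ Subgroup.closure {r, s} := by rw [ht]; exact mul_mem hrG hsG
  set G := Subgroup.closure {r, s} with hG
  set tG : G := ⟨t, htG⟩ with htGdef
  set rG : G := ⟨r, hrG⟩ with hrGdef
  have hcoe_zpow : ∀ k : ℤ, ((tG ^ k : G) : Face ≃o Face) = t ^ k := by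
    intro k
    exact SubgroupClass.coe_zpow tG k
  have htGq : tG ^ ((q:ℕ):ℤ) = 1 := by
    apply Subtype.ext
    rw [hcoe_zpow]
    show t ^ ((q:ℕ):ℤ) = ((1 : G) : Face ≃o Face)
    apply A.smul_flag_injective (Φ₀ := Φ)
    rw [htz]
    show phi A Φ l (4 * (q:ℤ)) = (1 : Face ≃o Face) • Φ
    rw [one_smul]
    conv_rhs => rw [← phi_zero (A := A) (Φ := Φ) (l := l)]
    apply (phi_eq_iff A Φ hln hd _ _).2
    exact ⟨1, by rw [hd4]; ring⟩
  have htG_ord : ∀ k : ℤ, tG ^ k = 1 → ((q:ℕ):ℤ) ∣ k := by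
    intro k hk
    have hk' : t ^ k = 1 := by
      have := congrArg (Subtype.val) hk
      rwa [hcoe_zpow] at this
    have h1 : phi A Φ l (4 * k) = phi A Φ l 0 := by
      rw [← htz k, hk', one_smul, phi_zero]
    have h2 := (phi_eq_iff A Φ hln hd _ _).1 h1
    rw [sub_zero, hd4] at h2
    obtain ⟨w, hw⟩ := h2
    refine ⟨w, ?_⟩
    rw [mul_assoc] at hw
    exact mul_left_cancel₀ (by norm_num : (4:ℤ) ≠ 0) hw
  have hrt : ∀ k : ℤ, r ≠ t ^ k := by
    intro k hk
    have h1 : phi A Φ l u = phi A Φ l (4 * k) := by rw [← hr, ← htz k, hk]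
    have h2 := phi_eq_even A Φ hln h1
    rw [Int.even_iff] at h2
    rw [Int.not_even_iff] at hu
    omega
  -- the ZMod lift
  have hlift0 : (zmultiplesHom (Additive G) (Additive.ofMul tG)) ((q:ℕ):ℤ) = 0 := by
    show ((q:ℕ):ℤ) • (Additive.ofMul tG) = 0
    rw [← ofMul_zpow, htGq]
    rfl
  set L : ZMod q →+ Additive G :=
    ZMod.lift q ⟨zmultiplesHom (Additive G) (Additive.ofMul tG), hlift0⟩ with hL
  set T : ZMod q → G := fun i => Additive.toMul (L i) with hT
  have hT_int : ∀ k : ℤ, T ((k : ℤ) : ZMod q) = tG ^ k := by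
    intro k
    show Additive.toMul (L ((k : ℤ) : ZMod q)) = tG ^ k
    rw [hL, ZMod.lift_coe]
    show Additive.toMul (k • (Additive.ofMul tG)) = tG ^ k
    rw [← ofMul_zpow]
    rfl
  have hT_add : ∀ i j, T (i + j) = T i * T j := by
    intro i j
    show Additive.toMul (L (i + j)) = Additive.toMul (L i) * Additive.toMul (L j)
    rw [map_add]
    rfl
  have hT_zero : T 0 = 1 := by
    show Additive.toMul (L 0) = 1
    rw [map_zero]
    rfl
  have hrGsq : rG * rG = 1 := Subtype.ext hr2
  have hTr : ∀ i, T i * rG = rG * T (-i) := by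
    intro i
    obtain ⟨k, rfl⟩ := ZMod.intCast_surjective i
    rw [hT_int, ← Int.cast_neg, hT_int]
    apply Subtype.ext
    show ((tG ^ k * rG : G) : Face ≃o Face) = ((rG * tG ^ (-k) : G) : Face ≃o Face)
    push_cast [hcoe_zpow]
    calc t ^ k * r = (r * r) * (t ^ k * r) := by rw [hr2, one_mul]
      _ = r * (r * t ^ k * r) := by group
      _ = r * t ^ (-k) := by rw [hconj]
  let f : DihedralGroup q → G := fun x => match x with
    | DihedralGroup.r i => T i
    | DihedralGroup.sr i => rG * T i
  have hfmul : ∀ x y, f (x * y) = f x * f y := by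
    rintro (i | i) (j | j)
    · rw [DihedralGroup.r_mul_r]
      exact hT_add i j
    · rw [DihedralGroup.r_mul_sr]
      show rG * T (j - i) = T i * (rG * T j)
      rw [← mul_assoc, hTr, mul_assoc, ← hT_add]
      congr 2
      ring
    · rw [DihedralGroup.sr_mul_r]
      show rG * T (i + j) = (rG * T i) * T j
      rw [mul_assoc, ← hT_add]
    · rw [DihedralGroup.sr_mul_sr]
      show T (j - i) = (rG * T i) * (rG * T j)
      rw [mul_assoc, ← mul_assoc (T i), hTr, ← mul_assoc, ← mul_assoc, hrGsq, one_mul,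
        ← hT_add]
      congr 1
      ring
  let fM : DihedralGroup q →* G := MonoidHom.mk' f hfmul
  have hinj : Function.Injective fM := by
    apply (injective_iff_map_eq_one fM).2
    rintro (i | i) h
    · obtain ⟨k, rfl⟩ := ZMod.intCast_surjective i
      have h1 : tG ^ k = 1 := by rw [← hT_int k]; exact h
      have h2 := htG_ord k h1
      rw [DihedralGroup.one_def]
      congr 1
      exact (ZMod.intCast_zmod_eq_zero_iff_dvd k q).2 h2
    · exfalso
      obtain ⟨k, rfl⟩ := ZMod.intCast_surjective i
      have h1 : rG * tG ^ k = 1 := by rw [← hT_int k]; exact h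
      have h2 : r * t ^ k = 1 := by
        have := congrArg (Subtype.val) h1
        rwa [show ((rG * tG ^ k : G) : Face ≃o Face) = r * t ^ k by push_cast [hcoe_zpow]; rfl]
          at this
      apply hrt (-k)
      rw [zpow_neg]
      exact eq_inv_of_mul_eq_one_left h2
  have hsurj : Function.Surjective fM := by
    have hle : Subgroup.closure {r, s} ≤ Subgroup.map G.subtype fM.range := by
      rw [Subgroup.closure_le]
      intro x hx
      rw [Set.mem_insert_iff, Set.mem_singleton_iff] at hx
      rcases hx with rfl | rfl
      · refine ⟨rG, ⟨DihedralGroup.sr 0, ?_⟩, rfl⟩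
        show rG * T 0 = rG
        rw [hT_zero, mul_one]
      · refine ⟨⟨x, hsG⟩, ⟨DihedralGroup.sr ((1:ℤ) : ZMod q), ?_⟩, rfl⟩
        show rG * T ((1:ℤ) : ZMod q) = ⟨x, hsG⟩
        rw [hT_int 1]
        apply Subtype.ext
        show ((rG * tG ^ (1:ℤ) : G) : Face ≃o Face) = x
        push_cast [hcoe_zpow]
        rw [zpow_one, ht, ← mul_assoc, hr2, one_mul]
    intro x
    have hx : (x : Face ≃o Face) ∈ Subgroup.map G.subtype fM.range := hle x.2
    rw [Subgroup.mem_map] at hx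
    obtain ⟨y, hy, hyx⟩ := hx
    obtain ⟨z, hz⟩ := MonoidHom.mem_range.1 hy
    refine ⟨z, ?_⟩
    have hyx' : y = x := Subtype.ext hyx
    rw [hz, hyx']
  refine ⟨hpeven, ?_⟩
  rw [hq2]
  exact ⟨(MulEquiv.ofBijective fM ⟨hinj, hsurj⟩).symm⟩

end Core

end AbstractPolytope

open AbstractPolytope in
/-- If the Schläfli entry `p_l` (the number of `l`-faces of the rank-2
section `Φ_{l+1}/Φ_{l-2}`) is odd then `l-1 ∈ I ↔ l ∈ I`; and if exactly one of
`l-1, l` lies in `I` then `p_l` is even and the subgroup generated by the two available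
involutions is dihedral of order `p_l`. -/
theorem stmt19 {n : ℕ} {Face : Type*} [PartialOrder Face] (A : AbstractPolytope n Face)
    (I : Set ℕ) (h2 : A.TwoOrbit) (hI : A.InClass I)
    (Φ : Flag Face)
    (ρ : ℕ → (Face ≃o Face)) (α : ℕ → ℕ → (Face ≃o Face)) (β : ℕ → ℕ → (Face ≃o Face))
    (hρ : ∀ i ∈ I, (ρ i) • Φ = A.adj Φ i)
    (hα : ∀ j k : ℕ, j < n → k < n → j ∉ I → k ∉ I →
        (α j k) • Φ = A.adj (A.adj Φ j) k)
    (hβ : ∀ j : ℕ, ∀ i ∈ I, j < n → j ∉ I →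
        (β j i) • Φ = A.adj (A.adj (A.adj Φ j) i) j)
    (l : ℕ) (hl1 : 1 ≤ l) (hln : l < n)
    (p : ℕ)
    (hp : p = Nat.card {H : Face // A.faceAt Φ ((l : ℤ) - 2) ≤ H ∧
        H ≤ A.faceAt Φ ((l : ℤ) + 1) ∧ A.rank H = (l : ℤ)}) :
    (Odd p → (l - 1 ∈ I ↔ l ∈ I))
    ∧ (l - 1 ∈ I → l ∉ I → Even p ∧
        Nonempty ((Subgroup.closure {ρ (l - 1), β l (l - 1)} : Subgroup (Face ≃o Face))
          ≃* DihedralGroup (p / 2)))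
    ∧ (l - 1 ∉ I → l ∈ I → Even p ∧
        Nonempty ((Subgroup.closure {ρ l, β (l - 1) l} : Subgroup (Face ≃o Face))
          ≃* DihedralGroup (p / 2))) := by
  have hl' : l - 1 < n := lt_of_le_of_lt (Nat.sub_le l 1) hln
  have case2 : l - 1 ∈ I → l ∉ I → Even p ∧
      Nonempty ((Subgroup.closure {ρ (l - 1), β l (l - 1)} : Subgroup (Face ≃o Face))
        ≃* DihedralGroup (p / 2)) := by
    intro hIn hOut
    exact core_dihedral A Φ hl1 hln (ρ (l-1)) (β l (l-1)) 1
      (by rw [Int.not_even_iff]; decide)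
      (by rw [phi_one A Φ hln, hρ (l-1) hIn])
      (by rw [show (1:ℤ) - 4 = -3 by norm_num, phi_neg_three A Φ hln, hβ l (l-1) hIn hln hOut])
      (fun g hg => hOut (A.class_of_exists h2 hI hln (Φ₀ := Φ)
        ⟨g, by rwa [show (1:ℤ) - 2 = -1 by norm_num, phi_neg_one A Φ hln] at hg⟩))
      p hp
  have case3 : l - 1 ∉ I → l ∈ I → Even p ∧
      Nonempty ((Subgroup.closure {ρ l, β (l - 1) l} : Subgroup (Face ≃o Face))
        ≃* DihedralGroup (p / 2)) := by
    intro hOut hIn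
    have hkey := core_dihedral A Φ hl1 hln (β (l-1) l) (ρ l) 3
      (by rw [Int.not_even_iff]; decide)
      (by rw [phi_three A Φ hln, hβ (l-1) l hIn hl' hOut])
      (by rw [show (3:ℤ) - 4 = -1 by norm_num, phi_neg_one A Φ hln, hρ l hIn])
      (fun g hg => hOut (A.class_of_exists h2 hI hl' (Φ₀ := Φ)
        ⟨g, by rwa [show (3:ℤ) - 2 = 1 by norm_num, phi_one A Φ hln] at hg⟩))
      p hp
    rwa [Set.pair_comm (β (l-1) l) (ρ l)] at hkey
  refine ⟨?_, case2, case3⟩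
  intro hodd
  rw [Nat.odd_iff] at hodd
  constructor
  · intro hin
    by_contra hout
    have := (case2 hin hout).1
    rw [Nat.even_iff] at this
    omega
  · intro hin
    by_contra hout
    have := (case3 hout hin).1
    rw [Nat.even_iff] at this
    omega
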